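/- arXiv:1509.01959 — 2 statements merged into one kernel-verified Lean document; each statement's English description precedes it below -/
import Mathlib

section
/- Let σ, k, m, c be real numbers with k ≠ 0, let I ⊆ ℝ be an open set, and let Φ : ℝ → ℝ be differentiable on I with Φ'(ξ) = σ + Φ(ξ)² for all ξ ∈ I. Define u(x,y,t) = (m² - 8σk⁴ - kc)/(6k²) - 2k²·Φ(ct + kx + my)². Then u satisfies the Kadomtsev–Petviashvili equation u_{yy} = ∂/∂x (u_t + 6·u·u_x + u_{xxx}) at every point (x,y,t) with ct + kx + my ∈ I. -/
/-!
The function `u` is a traveling wave `w (c t + k x + m y)` with profile `w = A - 2 k² Φ²`, so the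
KP equation at a point reduces to the ordinary differential equation
`m² w'' = k (c w' + 6 k w w' + k³ w''')'` for `w`. Along a solution of `Φ' = σ + Φ²`, the derivative
of `P ∘ Φ` is `(P' · (σ + X²)) ∘ Φ` for every polynomial `P`, so on the open set `I` every
derivative of `w` is a polynomial in `Φ`, and the reduced equation becomes a polynomial identity
in `Φ`, which holds for the value of the constant `A`.
-/

open Filter Topology Polynomial

variable {𝕜 : Type*} [NontriviallyNormedField 𝕜]

section TravelingWave

theorem deriv_comp_mul_add (f : 𝕜 → 𝕜) (a b : 𝕜) :
    deriv (fun s => f (a * s + b)) = fun s => a * deriv f (a * s + b) := by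
  ext s
  simpa [deriv_comp_add_const] using deriv_comp_mul_left a (fun z => f (z + b)) s

variable (f : 𝕜 → 𝕜) (c k m : 𝕜)

theorem deriv_travelingWave_x (y t : 𝕜) :
    deriv (fun x => f (c * t + k * x + m * y)) = fun x => k * deriv f (c * t + k * x + m * y) := by
  have h : (fun x => f (c * t + k * x + m * y)) = fun x => f (k * x + (c * t + m * y)) := by
    ext x; ring_nf
  rw [h, deriv_comp_mul_add]
  ext x; ring_nf

theorem deriv_travelingWave_y (x t : 𝕜) :
    deriv (fun y => f (c * t + k * x + m * y)) = fun y => m * deriv f (c * t + k * x + m * y) := by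
  have h : (fun y => f (c * t + k * x + m * y)) = fun y => f (m * y + (c * t + k * x)) := by
    ext y; ring_nf
  rw [h, deriv_comp_mul_add]
  ext y; ring_nf

theorem deriv_travelingWave_t (x y : 𝕜) :
    deriv (fun t => f (c * t + k * x + m * y)) = fun t => c * deriv f (c * t + k * x + m * y) := by
  have h : (fun t => f (c * t + k * x + m * y)) = fun t => f (c * t + (k * x + m * y)) := by
    ext t; ring_nf
  rw [h, deriv_comp_mul_add]
  ext t; ring_nf

end TravelingWave

noncomputable def kpFlux (u : 𝕜 → 𝕜 → 𝕜 → 𝕜) (y t x : 𝕜) : 𝕜 :=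
  deriv (fun t' => u x y t') t + 6 * u x y t * deriv (fun x' => u x' y t) x
    + deriv (deriv (deriv (fun x' => u x' y t))) x

noncomputable def kpProfileFlux (w : 𝕜 → 𝕜) (c k ξ : 𝕜) : 𝕜 :=
  c * deriv w ξ + 6 * k * w ξ * deriv w ξ + k ^ 3 * deriv (deriv (deriv w)) ξ

section KP

variable {u : 𝕜 → 𝕜 → 𝕜 → 𝕜} {w : 𝕜 → 𝕜} {c k m : 𝕜}

theorem kpFlux_travelingWave (hu : ∀ x y t, u x y t = w (c * t + k * x + m * y)) (x y t : 𝕜) :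
    kpFlux u y t x = kpProfileFlux w c k (c * t + k * x + m * y) := by
  obtain rfl : u = fun x y t => w (c * t + k * x + m * y) := funext₃ hu
  simp only [kpFlux, kpProfileFlux, deriv_travelingWave_x, deriv_travelingWave_t,
    deriv_const_mul_field']
  ring

theorem kp_travelingWave_iff (hu : ∀ x y t, u x y t = w (c * t + k * x + m * y)) (x y t : 𝕜) :
    deriv (deriv (fun y' => u x y' t)) y = deriv (kpFlux u y t) x ↔
      m ^ 2 * deriv (deriv w) (c * t + k * x + m * y) =
        k * deriv (kpProfileFlux w c k) (c * t + k * x + m * y) := by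
  rw [funext (kpFlux_travelingWave hu · y t), deriv_travelingWave_x]
  obtain rfl : u = fun x y t => w (c * t + k * x + m * y) := funext₃ hu
  simp only [deriv_travelingWave_y, deriv_const_mul_field']
  ring_nf

end KP

namespace Polynomial

noncomputable def derivAlong (R P : 𝕜[X]) : 𝕜[X] := derivative P * R

theorem hasDerivAt_eval_comp_of_hasDerivAt {Φ : 𝕜 → 𝕜} {R : 𝕜[X]} {x : 𝕜}
    (hΦ : HasDerivAt Φ (R.eval (Φ x)) x) (P : 𝕜[X]) :
    HasDerivAt (fun x => P.eval (Φ x)) ((derivAlong R P).eval (Φ x)) x := by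
  rw [derivAlong, eval_mul]
  exact (P.hasDerivAt (Φ x)).comp x hΦ

theorem iter_deriv_eval_comp_eventuallyEq {Φ : 𝕜 → 𝕜} {R : 𝕜[X]} {I : Set 𝕜} (hI : IsOpen I)
    (hΦ : ∀ x ∈ I, HasDerivAt Φ (R.eval (Φ x)) x) {x : 𝕜} (hx : x ∈ I) (P : 𝕜[X]) (n : ℕ) :
    deriv^[n] (fun x => P.eval (Φ x)) =ᶠ[𝓝 x] fun x => ((derivAlong R)^[n] P).eval (Φ x) := by
  induction n with
  | zero => rfl
  | succ n ih =>
    simp only [Function.iterate_succ_apply']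
    refine ih.deriv.trans ?_
    filter_upwards [hI.mem_nhds hx] with z hz
    exact (hasDerivAt_eval_comp_of_hasDerivAt (hΦ z hz) _).deriv

end Polynomial

theorem reducedKP_of_riccati [CharZero 𝕜] {σ k m c : 𝕜} (hk : k ≠ 0) {I : Set 𝕜} (hI : IsOpen I)
    {Φ : 𝕜 → 𝕜} (hΦ : ∀ ξ ∈ I, HasDerivAt Φ (σ + Φ ξ ^ 2) ξ) {ξ : 𝕜} (hξ : ξ ∈ I) :
    let w := fun ξ => (m ^ 2 - 8 * σ * k ^ 4 - k * c) / (6 * k ^ 2) - 2 * k ^ 2 * Φ ξ ^ 2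
    m ^ 2 * deriv (deriv w) ξ = k * deriv (kpProfileFlux w c k) ξ := by
  intro w
  let R : 𝕜[X] := C σ + X ^ 2
  let D := derivAlong R
  let W : 𝕜[X] := C ((m ^ 2 - 8 * σ * k ^ 4 - k * c) / (6 * k ^ 2)) - C (2 * k ^ 2) * X ^ 2
  let G : 𝕜[X] := C c * D W + C (6 * k) * W * D W + C (k ^ 3) * D (D (D W))
  have hR : ∀ ξ ∈ I, HasDerivAt Φ (R.eval (Φ ξ)) ξ := by simpa [R] using hΦ
  have hw : w = fun ξ => W.eval (Φ ξ) := by ext; simp [w, W]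
  have e := hw ▸ iter_deriv_eval_comp_eventuallyEq hI hR hξ W
  have e1 : deriv w =ᶠ[𝓝 ξ] fun ζ => (D W).eval (Φ ζ) := e 1
  have e2 : deriv (deriv w) =ᶠ[𝓝 ξ] fun ζ => (D (D W)).eval (Φ ζ) := e 2
  have e3 : deriv (deriv (deriv w)) =ᶠ[𝓝 ξ] fun ζ => (D (D (D W))).eval (Φ ζ) := e 3
  have hflux : kpProfileFlux w c k =ᶠ[𝓝 ξ] fun ζ => G.eval (Φ ζ) := by
    filter_upwards [e1, e3] with z h1 h3
    rw [kpProfileFlux, h1, h3, hw]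
    simp only [G, eval_add, eval_mul, eval_C]
  rw [e2.eq_of_nhds, hflux.deriv_eq, (hasDerivAt_eval_comp_of_hasDerivAt (hR ξ hξ) G).deriv]
  simp only [G, D, W, R, derivAlong, derivative_mul, derivative_add, derivative_sub,
    derivative_C, derivative_X_sq, derivative_X, derivative_zero, derivative_one,
    eval_add, eval_sub, eval_mul, eval_C, eval_pow, eval_X, eval_zero, eval_one]
  field_simp
  ring

/-- If Φ solves the Riccati equation Φ' = σ + Φ² on an open set I and k ≠ 0, then
u(x,y,t) = (m²-8σk⁴-kc)/(6k²) - 2k²·Φ(ct+kx+my)² satisfies the KP equation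
u_{yy} = ∂/∂x (u_t + 6·u·u_x + u_{xxx}) at every point with ct+kx+my ∈ I. -/
theorem riccati_solution_of_KP (σ k m c : ℝ) (hk : k ≠ 0)
    (I : Set ℝ) (hI : IsOpen I) (Φ : ℝ → ℝ)
    (hΦ : ∀ ξ ∈ I, HasDerivAt Φ (σ + Φ ξ ^ 2) ξ)
    (u : ℝ → ℝ → ℝ → ℝ)
    (hu : ∀ x y t : ℝ,
      u x y t = (m ^ 2 - 8 * σ * k ^ 4 - k * c) / (6 * k ^ 2)
        - 2 * k ^ 2 * Φ (c * t + k * x + m * y) ^ 2) :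
    ∀ x y t : ℝ, c * t + k * x + m * y ∈ I →
      deriv (deriv (fun y' : ℝ => u x y' t)) y =
        deriv (fun x' : ℝ =>
          deriv (fun t' : ℝ => u x' y t') t
            + 6 * u x' y t * deriv (fun x'' : ℝ => u x'' y t) x'
            + deriv (deriv (deriv (fun x'' : ℝ => u x'' y t))) x') x :=
  fun x y t hξ => (kp_travelingWave_iff hu x y t).2 (reducedKP_of_riccati hk hI hΦ hξ)
end

section
/- Let k, c be real numbers with k ≠ 0, and define u(x,t) = (8k⁴ + c² - k²)/(6k²) - 2k²·tanh²(ct + kx). Then u is smooth on ℝ² and satisfies the fourth-order Boussinesq equation u_{tt} = u_{xx} + 3·(u²)_{xx} + u_{xxxx} at every point (x,t) ∈ ℝ². -/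
private lemma tanh_hasDerivAt (y : ℝ) :
    HasDerivAt Real.tanh (1 - Real.tanh y ^ 2) y := by
  have h : HasDerivAt (fun z => Real.sinh z / Real.cosh z)
      ((Real.cosh y * Real.cosh y - Real.sinh y * Real.sinh y) / Real.cosh y ^ 2) y :=
    (Real.hasDerivAt_sinh y).div (Real.hasDerivAt_cosh y) (Real.cosh_pos y).ne'
  have hf : Real.tanh = fun z => Real.sinh z / Real.cosh z :=
    funext fun z => Real.tanh_eq_sinh_div_cosh z
  rw [hf]
  convert h using 1
  simp only []
  have h1 : Real.cosh y ≠ 0 := (Real.cosh_pos y).ne'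
  have h2 : Real.cosh y ^ 2 - Real.sinh y ^ 2 = 1 := Real.cosh_sq_sub_sinh_sq y
  field_simp

private lemma contDiff_tanh_real : ContDiff ℝ (⊤ : ℕ∞) Real.tanh := by
  have hf : Real.tanh = fun z => Real.sinh z / Real.cosh z :=
    funext fun z => Real.tanh_eq_sinh_div_cosh z
  rw [hf]
  exact Real.contDiff_sinh.div Real.contDiff_cosh fun z => (Real.cosh_pos z).ne'

/-- For k ≠ 0, u(x,t) = (8k⁴+c²-k²)/(6k²) - 2k²·tanh²(ct+kx) is smooth on ℝ² and
satisfies the fourth-order Boussinesq equation u_{tt} = u_{xx} + 3·(u²)_{xx} + u_{xxxx}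
everywhere. -/
theorem tanh_solution_of_Boussinesq (k c : ℝ) (hk : k ≠ 0) (u : ℝ → ℝ → ℝ)
    (hu : ∀ x t : ℝ,
      u x t = (8 * k ^ 4 + c ^ 2 - k ^ 2) / (6 * k ^ 2)
        - 2 * k ^ 2 * Real.tanh (c * t + k * x) ^ 2) :
    ContDiff ℝ (⊤ : ℕ∞) (fun p : ℝ × ℝ => u p.1 p.2) ∧
    ∀ x t : ℝ,
      deriv (deriv (fun t' : ℝ => u x t')) t =
        deriv (deriv (fun x' : ℝ => u x' t)) x
          + 3 * deriv (deriv (fun x' : ℝ => (u x' t) ^ 2)) x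
          + deriv (deriv (deriv (deriv (fun x' : ℝ => u x' t)))) x := by
  set A : ℝ := (8 * k ^ 4 + c ^ 2 - k ^ 2) / (6 * k ^ 2) with hA
  constructor
  · have hfun : (fun p : ℝ × ℝ => u p.1 p.2)
        = fun p : ℝ × ℝ => A - 2 * k ^ 2 * Real.tanh (c * p.2 + k * p.1) ^ 2 :=
      funext fun p => hu p.1 p.2
    rw [hfun]
    have hlin : ContDiff ℝ (⊤ : ℕ∞) (fun p : ℝ × ℝ => c * p.2 + k * p.1) :=
      (contDiff_snd.const_smul c).add (contDiff_fst.const_smul k)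
    exact contDiff_const.sub
      (contDiff_const.mul ((contDiff_tanh_real.comp hlin).pow 2))
  · intro x t
    -- chain rule for tanh of affine maps
    have hqx : ∀ y : ℝ, HasDerivAt (fun x' : ℝ => Real.tanh (c * t + k * x'))
        ((1 - Real.tanh (c * t + k * y) ^ 2) * k) y := by
      intro y
      have hin : HasDerivAt (fun x' : ℝ => c * t + k * x') k y := by
        simpa using ((hasDerivAt_id y).const_mul k).const_add (c * t)
      exact (tanh_hasDerivAt (c * t + k * y)).comp y hin
    have hqt : ∀ s : ℝ, HasDerivAt (fun t' : ℝ => Real.tanh (c * t' + k * x))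
        ((1 - Real.tanh (c * s + k * x) ^ 2) * c) s := by
      intro s
      have hin : HasDerivAt (fun t' : ℝ => c * t' + k * x) c s := by
        simpa using ((hasDerivAt_id s).const_mul c).add_const (k * x)
      exact (tanh_hasDerivAt (c * s + k * x)).comp s hin
    -- x-direction derivative stages
    have h0 : ∀ y : ℝ, HasDerivAt
        (fun x' : ℝ => A - 2 * k ^ 2 * Real.tanh (c * t + k * x') ^ 2)
        (-4 * k ^ 3 * (Real.tanh (c * t + k * y) - Real.tanh (c * t + k * y) ^ 3)) y := by
      intro y
      have := (((hqx y).pow 2).const_mul (2 * k ^ 2)).const_sub A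
      convert this using 1
      all_goals first | rfl | ring
    have h1 : ∀ y : ℝ, HasDerivAt
        (fun x' : ℝ => -4 * k ^ 3 * (Real.tanh (c * t + k * x') - Real.tanh (c * t + k * x') ^ 3))
        (-4 * k ^ 4 * (1 - 4 * Real.tanh (c * t + k * y) ^ 2 + 3 * Real.tanh (c * t + k * y) ^ 4)) y := by
      intro y
      have := ((hqx y).sub ((hqx y).pow 3)).const_mul (-4 * k ^ 3)
      convert this using 1
      all_goals first | rfl | ring
    have h2 : ∀ y : ℝ, HasDerivAt
        (fun x' : ℝ => -4 * k ^ 4 * (1 - 4 * Real.tanh (c * t + k * x') ^ 2 + 3 * Real.tanh (c * t + k * x') ^ 4))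
        (-4 * k ^ 5 * (-8 * Real.tanh (c * t + k * y) + 20 * Real.tanh (c * t + k * y) ^ 3
          - 12 * Real.tanh (c * t + k * y) ^ 5)) y := by
      intro y
      have := (((hasDerivAt_const y (1:ℝ)).sub (((hqx y).pow 2).const_mul 4)).add
        (((hqx y).pow 4).const_mul 3)).const_mul (-4 * k ^ 4)
      convert this using 1
      all_goals first | rfl | ring
    have h3 : ∀ y : ℝ, HasDerivAt
        (fun x' : ℝ => -4 * k ^ 5 * (-8 * Real.tanh (c * t + k * x') + 20 * Real.tanh (c * t + k * x') ^ 3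
          - 12 * Real.tanh (c * t + k * x') ^ 5))
        (-4 * k ^ 6 * (-8 + 68 * Real.tanh (c * t + k * y) ^ 2 - 120 * Real.tanh (c * t + k * y) ^ 4
          + 60 * Real.tanh (c * t + k * y) ^ 6)) y := by
      intro y
      have := ((((hqx y).const_mul (-8)).add (((hqx y).pow 3).const_mul 20)).sub
        (((hqx y).pow 5).const_mul 12)).const_mul (-4 * k ^ 5)
      convert this using 1
      all_goals first | rfl | ring
    -- square stages
    have hv0 : ∀ y : ℝ, HasDerivAt
        (fun x' : ℝ => (A - 2 * k ^ 2 * Real.tanh (c * t + k * x') ^ 2) ^ 2)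
        (2 * ((A - 2 * k ^ 2 * Real.tanh (c * t + k * y) ^ 2) *
          (-4 * k ^ 3 * (Real.tanh (c * t + k * y) - Real.tanh (c * t + k * y) ^ 3)))) y := by
      intro y
      have := (h0 y).pow 2
      convert this using 1
      all_goals first | rfl | ring
    have hv1 : ∀ y : ℝ, HasDerivAt
        (fun x' : ℝ => 2 * ((A - 2 * k ^ 2 * Real.tanh (c * t + k * x') ^ 2) *
          (-4 * k ^ 3 * (Real.tanh (c * t + k * x') - Real.tanh (c * t + k * x') ^ 3))))
        (2 * ((-4 * k ^ 3 * (Real.tanh (c * t + k * y) - Real.tanh (c * t + k * y) ^ 3)) *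
            (-4 * k ^ 3 * (Real.tanh (c * t + k * y) - Real.tanh (c * t + k * y) ^ 3))
          + (A - 2 * k ^ 2 * Real.tanh (c * t + k * y) ^ 2) *
            (-4 * k ^ 4 * (1 - 4 * Real.tanh (c * t + k * y) ^ 2
              + 3 * Real.tanh (c * t + k * y) ^ 4)))) y := by
      intro y
      exact ((h0 y).mul (h1 y)).const_mul 2
    -- t-direction stages
    have ht0 : ∀ s : ℝ, HasDerivAt
        (fun t' : ℝ => A - 2 * k ^ 2 * Real.tanh (c * t' + k * x) ^ 2)
        (-4 * k ^ 2 * c * (Real.tanh (c * s + k * x) - Real.tanh (c * s + k * x) ^ 3)) s := by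
      intro s
      have := (((hqt s).pow 2).const_mul (2 * k ^ 2)).const_sub A
      convert this using 1
      all_goals first | rfl | ring
    have ht1 : ∀ s : ℝ, HasDerivAt
        (fun t' : ℝ => -4 * k ^ 2 * c * (Real.tanh (c * t' + k * x) - Real.tanh (c * t' + k * x) ^ 3))
        (-4 * k ^ 2 * c ^ 2 * (1 - 4 * Real.tanh (c * s + k * x) ^ 2
          + 3 * Real.tanh (c * s + k * x) ^ 4)) s := by
      intro s
      have := ((hqt s).sub ((hqt s).pow 3)).const_mul (-4 * k ^ 2 * c)
      convert this using 1
      all_goals first | rfl | ring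
    -- compute all the derivs in the goal
    have e0 : (fun x' : ℝ => u x' t)
        = fun x' : ℝ => A - 2 * k ^ 2 * Real.tanh (c * t + k * x') ^ 2 :=
      funext fun x' => hu x' t
    have e1 : deriv (fun x' : ℝ => u x' t)
        = fun y : ℝ => -4 * k ^ 3 * (Real.tanh (c * t + k * y) - Real.tanh (c * t + k * y) ^ 3) := by
      rw [e0]; exact funext fun y => (h0 y).deriv
    have e2 : deriv (deriv (fun x' : ℝ => u x' t))
        = fun y : ℝ => -4 * k ^ 4 * (1 - 4 * Real.tanh (c * t + k * y) ^ 2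
          + 3 * Real.tanh (c * t + k * y) ^ 4) := by
      rw [e1]; exact funext fun y => (h1 y).deriv
    have e3 : deriv (deriv (deriv (fun x' : ℝ => u x' t)))
        = fun y : ℝ => -4 * k ^ 5 * (-8 * Real.tanh (c * t + k * y)
          + 20 * Real.tanh (c * t + k * y) ^ 3 - 12 * Real.tanh (c * t + k * y) ^ 5) := by
      rw [e2]; exact funext fun y => (h2 y).deriv
    have d4 : deriv (deriv (deriv (deriv (fun x' : ℝ => u x' t)))) x
        = -4 * k ^ 6 * (-8 + 68 * Real.tanh (c * t + k * x) ^ 2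
          - 120 * Real.tanh (c * t + k * x) ^ 4 + 60 * Real.tanh (c * t + k * x) ^ 6) := by
      rw [e3]; exact (h3 x).deriv
    have d2 : deriv (deriv (fun x' : ℝ => u x' t)) x
        = -4 * k ^ 4 * (1 - 4 * Real.tanh (c * t + k * x) ^ 2
          + 3 * Real.tanh (c * t + k * x) ^ 4) := by
      rw [e1]; exact (h1 x).deriv
    have es0 : (fun x' : ℝ => (u x' t) ^ 2)
        = fun x' : ℝ => (A - 2 * k ^ 2 * Real.tanh (c * t + k * x') ^ 2) ^ 2 :=
      funext fun x' => by rw [hu x' t]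
    have es1 : deriv (fun x' : ℝ => (u x' t) ^ 2)
        = fun y : ℝ => 2 * ((A - 2 * k ^ 2 * Real.tanh (c * t + k * y) ^ 2) *
          (-4 * k ^ 3 * (Real.tanh (c * t + k * y) - Real.tanh (c * t + k * y) ^ 3))) := by
      rw [es0]; exact funext fun y => (hv0 y).deriv
    have dsq : deriv (deriv (fun x' : ℝ => (u x' t) ^ 2)) x
        = 2 * ((-4 * k ^ 3 * (Real.tanh (c * t + k * x) - Real.tanh (c * t + k * x) ^ 3)) *
            (-4 * k ^ 3 * (Real.tanh (c * t + k * x) - Real.tanh (c * t + k * x) ^ 3))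
          + (A - 2 * k ^ 2 * Real.tanh (c * t + k * x) ^ 2) *
            (-4 * k ^ 4 * (1 - 4 * Real.tanh (c * t + k * x) ^ 2
              + 3 * Real.tanh (c * t + k * x) ^ 4))) := by
      rw [es1]; exact (hv1 x).deriv
    have et0 : (fun t' : ℝ => u x t')
        = fun t' : ℝ => A - 2 * k ^ 2 * Real.tanh (c * t' + k * x) ^ 2 :=
      funext fun t' => hu x t'
    have et1 : deriv (fun t' : ℝ => u x t')
        = fun s : ℝ => -4 * k ^ 2 * c * (Real.tanh (c * s + k * x) - Real.tanh (c * s + k * x) ^ 3) := by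
      rw [et0]; exact funext fun s => (ht0 s).deriv
    have dtt : deriv (deriv (fun t' : ℝ => u x t')) t
        = -4 * k ^ 2 * c ^ 2 * (1 - 4 * Real.tanh (c * t + k * x) ^ 2
          + 3 * Real.tanh (c * t + k * x) ^ 4) := by
      rw [et1]; exact (ht1 t).deriv
    rw [dtt, d2, dsq, d4, hA]
    have hk2 : k ^ 2 ≠ 0 := pow_ne_zero 2 hk
    field_simp
    ring
end
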